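/- Let Δ > 0, b ∈ (0,1), and let i ≥ 2 be an integer such that b·(6i² − 6i + 1) > 1. Then the sequence (h_k)_{0 ≤ k ≤ i−1} is unimodal with a minimum: there exists an integer k* with 0 ≤ k* ≤ i−1 such that h₀ ≥ h₁ ≥ ⋯ ≥ h_{k*} and h_{k*} ≤ h_{k*+1} ≤ ⋯ ≤ h_{i−1}. -/

import Mathlib

/-!
The difference `h_{k+1} - h_k` is a nonnegative multiple of
`f(k) = 12 i (k + 1) b + (6 k² + 12 k + 4)(1 - b) - 6 i² b`, and `f` is increasing in `k`.
Hence `h` decreases as long as `f < 0` and increases from the first `k` with `f(k) ≥ 0` on.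
-/

noncomputable section

/-- The ratio h_k = w_k / u_k of the per-layer cost weight to the per-layer volume
weight in the two-dimensional staircase optimization, with c₀ = 1/(1−b),
c₁ = b/(1−b)², c₂ = (b+b²)/(1−b)³. -/
def hseq (Δ b : ℝ) (i k : ℕ) : ℝ :=
  (2 * Δ / (3 * (i : ℝ))) *
    (3 * (i : ℝ) ^ 2 * ((b + b ^ 2) / (1 - b) ^ 3) +
      (6 * (i : ℝ) * (k : ℝ) + 3 * (i : ℝ)) * (b / (1 - b) ^ 2) +
      (1 + 3 * (k : ℝ) + 3 * (k : ℝ) ^ 2) * (1 / (1 - b))) /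
    ((1 + 2 * (k : ℝ)) * (1 / (1 - b)) + 2 * (i : ℝ) * (b / (1 - b) ^ 2))

section Unimodal

open Set Order

variable {α β : Type*} [LinearOrder α] [Zero α] [Preorder β]

theorem exists_antitoneOn_Iic_monotoneOn_Icc_of_step_sign {g : ℕ → β} {f : ℕ → α}
    (hf : Monotone f) (hdec : ∀ k, f k < 0 → g (k + 1) ≤ g k)
    (hinc : ∀ k, 0 ≤ f k → g k ≤ g (k + 1)) (m : ℕ) :
    ∃ n ≤ m, AntitoneOn g (Iic n) ∧ MonotoneOn g (Icc n m) := by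
  classical
  have hex : ∃ n, m ≤ n ∨ 0 ≤ f n := ⟨m, .inl le_rfl⟩
  refine ⟨min (Nat.find hex) m, min_le_right _ _, ?_, ?_⟩
  · refine antitoneOn_of_succ_le ordConnected_Iic fun k _ _ hk1 => ?_
    rw [succ_eq_add_one, mem_Iic] at hk1
    rw [succ_eq_add_one]
    have hk : k < Nat.find hex := by omega
    exact hdec k (not_le.mp (not_or.mp (Nat.find_min hex hk)).2)
  · refine monotoneOn_of_le_succ ordConnected_Icc fun k _ hk hk1 => ?_
    rw [succ_eq_add_one, mem_Icc] at hk1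
    rw [mem_Icc] at hk
    rw [succ_eq_add_one]
    refine hinc k ?_
    rcases Nat.find_spec hex with hm | hpos
    · omega
    · exact hpos.trans (hf (by omega))

end Unimodal

def hseqNum (b : ℝ) (i k : ℕ) : ℝ :=
  3 * (i : ℝ) ^ 2 * ((b + b ^ 2) / (1 - b) ^ 3) +
    (6 * (i : ℝ) * (k : ℝ) + 3 * (i : ℝ)) * (b / (1 - b) ^ 2) +
    (1 + 3 * (k : ℝ) + 3 * (k : ℝ) ^ 2) * (1 / (1 - b))

def hseqDen (b : ℝ) (i k : ℕ) : ℝ :=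
  (1 + 2 * (k : ℝ)) * (1 / (1 - b)) + 2 * (i : ℝ) * (b / (1 - b) ^ 2)

def hseqStepPoly (b : ℝ) (i k : ℕ) : ℝ :=
  12 * i * (k + 1) * b + (6 * k ^ 2 + 12 * k + 4) * (1 - b) - 6 * i ^ 2 * b

section Steps

variable {b : ℝ} (Δ : ℝ) (i : ℕ)

theorem hseq_eq_mul_div (k : ℕ) :
    hseq Δ b i k = 2 * Δ / (3 * i) * (hseqNum b i k / hseqDen b i k) :=
  mul_div_assoc _ _ _

theorem hseqDen_pos (hb : 0 ≤ b) (hb1 : b < 1) (k : ℕ) : 0 < hseqDen b i k := by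
  have : 0 < 1 - b := by linarith
  unfold hseqDen
  positivity

theorem hseqNum_hseqDen_cross_sub (hb1 : b < 1) (k : ℕ) :
    hseqNum b i (k + 1) * hseqDen b i k - hseqDen b i (k + 1) * hseqNum b i k =
      hseqStepPoly b i k / (1 - b) ^ 3 := by
  have : 1 - b ≠ 0 := by linarith
  unfold hseqNum hseqDen hseqStepPoly
  push_cast
  field_simp
  ring

theorem hseqStepPoly_monotone (hb : 0 ≤ b) (hb1 : b ≤ 1) : Monotone (hseqStepPoly b i) := by
  refine monotone_nat_of_le_succ fun k => sub_nonneg.mp ?_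
  have : 0 ≤ 1 - b := by linarith
  have key : hseqStepPoly b i (k + 1) - hseqStepPoly b i k =
      12 * i * b + (12 * k + 18) * (1 - b) := by
    unfold hseqStepPoly
    push_cast
    ring
  rw [key]
  positivity

theorem hseq_succ_sub (hb : 0 ≤ b) (hb1 : b < 1) (k : ℕ) :
    hseq Δ b i (k + 1) - hseq Δ b i k =
      2 * Δ / (3 * i) / ((1 - b) ^ 3 * (hseqDen b i (k + 1) * hseqDen b i k)) *
        hseqStepPoly b i k := by
  rw [hseq_eq_mul_div, hseq_eq_mul_div, ← mul_sub, div_sub_div _ _ (hseqDen_pos i hb hb1 _).ne'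
    (hseqDen_pos i hb hb1 _).ne', hseqNum_hseqDen_cross_sub i hb1, div_div, mul_div_assoc']
  simp only [div_mul_eq_mul_div]

theorem exists_nonneg_hseq_succ_sub_eq_mul (hΔ : 0 ≤ Δ) (hb : 0 ≤ b) (hb1 : b < 1) (k : ℕ) :
    ∃ c, 0 ≤ c ∧ hseq Δ b i (k + 1) - hseq Δ b i k = c * hseqStepPoly b i k := by
  have := hseqDen_pos i hb hb1 k
  have := hseqDen_pos i hb hb1 (k + 1)
  have : 0 < 1 - b := by linarith
  exact ⟨_, by positivity, hseq_succ_sub Δ i hb hb1 k⟩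

theorem hseq_le_succ (hΔ : 0 ≤ Δ) (hb : 0 ≤ b) (hb1 : b < 1) {k : ℕ}
    (hk : 0 ≤ hseqStepPoly b i k) : hseq Δ b i k ≤ hseq Δ b i (k + 1) := by
  obtain ⟨c, hc, h⟩ := exists_nonneg_hseq_succ_sub_eq_mul Δ i hΔ hb hb1 k
  exact sub_nonneg.mp (h ▸ mul_nonneg hc hk)

theorem hseq_succ_le (hΔ : 0 ≤ Δ) (hb : 0 ≤ b) (hb1 : b < 1) {k : ℕ}
    (hk : hseqStepPoly b i k ≤ 0) : hseq Δ b i (k + 1) ≤ hseq Δ b i k := by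
  obtain ⟨c, hc, h⟩ := exists_nonneg_hseq_succ_sub_eq_mul Δ i hΔ hb hb1 k
  exact sub_nonpos.mp (h ▸ mul_nonpos_of_nonneg_of_nonpos hc hk)

end Steps

end

theorem hseq_unimodal_general (Δ b : ℝ) (hΔ : 0 < Δ) (hb : 0 < b) (hb1 : b < 1)
    (i : ℕ) :
    ∃ kstar : ℕ, kstar ≤ i - 1 ∧
      (∀ k l : ℕ, k ≤ l → l ≤ kstar → hseq Δ b i l ≤ hseq Δ b i k) ∧
      (∀ k l : ℕ, kstar ≤ k → k ≤ l → l ≤ i - 1 → hseq Δ b i k ≤ hseq Δ b i l) := by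
  obtain ⟨n, hn, hanti, hmono⟩ := exists_antitoneOn_Iic_monotoneOn_Icc_of_step_sign
    (hseqStepPoly_monotone i hb.le hb1.le) (fun _ hk => hseq_succ_le Δ i hΔ.le hb.le hb1 hk.le)
    (fun _ => hseq_le_succ Δ i hΔ.le hb.le hb1) (i - 1)
  exact ⟨n, hn, fun k l hkl hln => hanti (hkl.trans hln) hln hkl,
    fun k l hnk hkl hli => hmono ⟨hnk, hkl.trans hli⟩ ⟨hnk.trans hkl, hli⟩ hkl⟩

/-- When b·(6i² − 6i + 1) > 1, the sequence (h_k)_{0 ≤ k ≤ i−1} is unimodal with a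
minimum: it first decreases and then increases. -/
theorem hseq_unimodal (Δ b : ℝ) (hΔ : 0 < Δ) (hb : 0 < b) (hb1 : b < 1)
    (i : ℕ) (hi : 2 ≤ i)
    (hcond : 1 < b * (6 * (i : ℝ) ^ 2 - 6 * (i : ℝ) + 1)) :
    ∃ kstar : ℕ, kstar ≤ i - 1 ∧
      (∀ k l : ℕ, k ≤ l → l ≤ kstar → hseq Δ b i l ≤ hseq Δ b i k) ∧
      (∀ k l : ℕ, kstar ≤ k → k ≤ l → l ≤ i - 1 → hseq Δ b i k ≤ hseq Δ b i l) :=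
  hseq_unimodal_general Δ b hΔ hb hb1 i
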